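/- arXiv:1705.00118 — 5 statements merged into one kernel-verified Lean document; each statement's English description precedes it below -/
import Mathlib

section
/- Let V be a real vector space with a symmetric bilinear form (·|·), let α, β ∈ V with (α|α) = (β|β) = 2 and (α|β) = -1 (resp. (α|β) = 1). Define X(γ) := -γ(γ|·) + (1/2)·id. Then {X(α), X(β)} = X(α+β) (resp. {X(α), X(β)} = X(α-β)). -/
/-!
Write `P γ := γ (γ|·)`, so that `X γ = -P γ + 1/2`. Bilinearity gives
`P (α + β) = P α + P β + Q` with `Q := α (β|·) + β (α|·)`, and symmetry of the form gives
`{P α, P β} = (α|β) Q`; hence `{X α, X β} = (α|β) Q - (P α + P β) + 1/2`, which is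
`X (α + β)` as soon as `(α|β) = -1`. The case `(α|β) = 1` follows by replacing `β` with `-β`,
since `X (-β) = X β`.
-/

theorem anticomm_neg_add_smul_one {R A : Type*} [CommRing R] [Ring A] [Algebra R A]
    (p q : A) (c : R) :
    (-p + c • 1) * (-q + c • 1) + (-q + c • 1) * (-p + c • 1) =
      (p * q + q * p) - (2 * c) • (p + q) + (2 * c * c) • (1 : A) := by
  simp only [mul_add, add_mul, mul_neg, neg_mul, mul_one, one_mul, smul_mul_assoc, mul_smul_comm]
  module

namespace LinearMap.BilinForm

section CommRing

variable {R V : Type*} [CommRing R] [AddCommGroup V] [Module R V]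

theorem smulRight_add_self (B : LinearMap.BilinForm R V) (α β : V) :
    smulRight (B (α + β)) (α + β) =
      smulRight (B α) α + smulRight (B β) β + (smulRight (B β) α + smulRight (B α) β) := by
  ext v
  simp only [smulRight_apply, map_add, LinearMap.add_apply, add_smul, smul_add]
  abel

theorem smulRight_neg_self (B : LinearMap.BilinForm R V) (β : V) :
    smulRight (B (-β)) (-β) = smulRight (B β) β := by
  ext v
  simp

theorem smulRight_anticomm {B : LinearMap.BilinForm R V} (hB : B.IsSymm) (α β : V) :
    smulRight (B α) α * smulRight (B β) β + smulRight (B β) β * smulRight (B α) α =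
      B α β • (smulRight (B β) α + smulRight (B α) β) := by
  ext v
  simp only [Module.End.mul_apply, smulRight_apply, map_smul, LinearMap.add_apply,
    LinearMap.smul_apply, hB.eq β α, smul_add, smul_smul, mul_comm]

end CommRing

variable {K V : Type*} [Field K] [AddCommGroup V] [Module K V]

def halfSubSmulRight (B : LinearMap.BilinForm K V) (γ : V) : Module.End K V :=
  -smulRight (B γ) γ + (1 / 2 : K) • 1

theorem halfSubSmulRight_neg (B : LinearMap.BilinForm K V) (γ : V) :
    B.halfSubSmulRight (-γ) = B.halfSubSmulRight γ := by
  rw [halfSubSmulRight, smulRight_neg_self, halfSubSmulRight]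

theorem IsSymm.anticomm_halfSubSmulRight_of_eq_neg_one [NeZero (2 : K)]
    {B : LinearMap.BilinForm K V} (hB : B.IsSymm) {α β : V} (hαβ : B α β = -1) :
    B.halfSubSmulRight α * B.halfSubSmulRight β + B.halfSubSmulRight β * B.halfSubSmulRight α =
      B.halfSubSmulRight (α + β) := by
  have h2 : (2 : K) * (1 / 2) = 1 := mul_one_div_cancel two_ne_zero
  simp only [halfSubSmulRight]
  rw [anticomm_neg_add_smul_one, smulRight_anticomm hB, hαβ, smulRight_add_self, h2, one_mul]
  module

end LinearMap.BilinForm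

theorem stmt4_general {V : Type*} [AddCommGroup V] [Module ℝ V]
    (B : LinearMap.BilinForm ℝ V) (hsymm : ∀ x y, B x y = B y x)
    (α β : V) :
    let X : V → Module.End ℝ V := fun γ =>
      -(LinearMap.smulRight (B γ) γ) + (1 / 2 : ℝ) • (1 : Module.End ℝ V)
    (B α β = -1 → X α * X β + X β * X α = X (α + β)) ∧
    (B α β = 1 → X α * X β + X β * X α = X (α - β)) := by
  intro X
  have hB : B.IsSymm := ⟨hsymm⟩
  refine ⟨hB.anticomm_halfSubSmulRight_of_eq_neg_one, fun hαβ => ?_⟩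
  have hαβ' : B α (-β) = -1 := by rw [map_neg, hαβ]
  have key := hB.anticomm_halfSubSmulRight_of_eq_neg_one hαβ'
  rwa [LinearMap.BilinForm.halfSubSmulRight_neg, ← sub_eq_add_neg] at key

/-- Coordinate-free spin-3/2 anticommutator identity: for norm-2 vectors `α, β`
with `(α|β) = ∓1` and `X(γ) = -γ(γ|·) + (1/2)·id`, one has
`{X(α), X(β)} = X(α ± β)`. -/
theorem stmt4 {V : Type*} [AddCommGroup V] [Module ℝ V]
    (B : LinearMap.BilinForm ℝ V) (hsymm : ∀ x y, B x y = B y x)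
    (α β : V) (hα : B α α = 2) (hβ : B β β = 2) :
    let X : V → Module.End ℝ V := fun γ =>
      -(LinearMap.smulRight (B γ) γ) + (1 / 2 : ℝ) • (1 : Module.End ℝ V)
    (B α β = -1 → X α * X β + X β * X α = X (α + β)) ∧
    (B α β = 1 → X α * X β + X β * X α = X (α - β)) :=
  stmt4_general B hsymm α β
end

section
/- Let V be a real vector space with a symmetric bilinear form, and for γ ∈ V with (γ|γ) = 2 let π_γ ∈ End(V) be v ↦ (γ|v)·γ. If (α|α) = (β|β) = 2 and (α|β) = -1, then on Sym²(V) (equivalently, as endomorphisms of V ⊗ V restricted to symmetric tensors) one has {X(α), X(β)} = X(α+β), where X(γ) := π_γ ⊗ π_γ - (π_γ ⊗ id + id ⊗ π_γ) + (1/2)·id ⊗ id. -/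
open TensorProduct

theorem stmt6_general {V : Type*} [AddCommGroup V] [Module ℝ V]
    (B : LinearMap.BilinForm ℝ V) (hsymm : ∀ x y, B x y = B y x)
    (α β : V) (hαβ : B α β = -1) :
    let π : V → Module.End ℝ V := fun γ => LinearMap.smulRight (B γ) γ
    let X : V → Module.End ℝ (V ⊗[ℝ] V) := fun γ =>
      TensorProduct.map (π γ) (π γ)
        - (TensorProduct.map (π γ) 1 + TensorProduct.map 1 (π γ))
        + (1 / 2 : ℝ) • (1 : Module.End ℝ (V ⊗[ℝ] V))
    ∀ z ∈ Submodule.span ℝ {x : V ⊗[ℝ] V | ∃ h : V, x = h ⊗ₜ[ℝ] h},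
      (X α * X β + X β * X α) z = X (α + β) z := by
  intro π X z hz
  have hβα : B β α = -1 := hsymm β α ▸ hαβ
  refine LinearMap.eqOn_span ?_ hz
  rintro _ ⟨h, rfl⟩
  simp only [X, π, Module.End.mul_apply, LinearMap.add_apply, LinearMap.sub_apply,
    LinearMap.smul_apply, Module.End.one_apply, map_tmul, LinearMap.smulRight_apply,
    map_add, map_sub, map_smul, tmul_add, add_tmul, tmul_smul, ← smul_tmul',
    hαβ, hβα]
  module

/-- Coordinate-free spin-5/2 anticommutator identity on the symmetric square:
for norm-2 vectors `α, β` with `(α|β) = -1`, the anticommutator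
`{X(α), X(β)}` agrees with `X(α+β)` on all symmetric tensors (the span of
the elements `h ⊗ h`). -/
theorem stmt6 {V : Type*} [AddCommGroup V] [Module ℝ V]
    (B : LinearMap.BilinForm ℝ V) (hsymm : ∀ x y, B x y = B y x)
    (α β : V) (hα : B α α = 2) (hβ : B β β = 2) (hαβ : B α β = -1) :
    let π : V → Module.End ℝ V := fun γ => LinearMap.smulRight (B γ) γ
    let X : V → Module.End ℝ (V ⊗[ℝ] V) := fun γ =>
      TensorProduct.map (π γ) (π γ)
        - (TensorProduct.map (π γ) 1 + TensorProduct.map 1 (π γ))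
        + (1 / 2 : ℝ) • (1 : Module.End ℝ (V ⊗[ℝ] V))
    ∀ z ∈ Submodule.span ℝ {x : V ⊗[ℝ] V | ∃ h : V, x = h ⊗ₜ[ℝ] h},
      (X α * X β + X β * X α) z = X (α + β) z :=
  stmt6_general B hsymm α β hαβ
end

section
/- Let ρ: Sym₃ → GL(V) be a finite-dimensional representation of the symmetric group on 3 letters over ℝ, and let s, t be two distinct transpositions. Then ρ(sts) - ρ(st) - ρ(ts) + ρ(s) + ρ(t) - id = 0 holds if and only if ρ does not contain the sign representation as an irreducible component. -/
/-!
For a character `χ` of a finite group, `P = ∑ g, χ(g)⁻¹ ρ(g)` satisfies `ρ(h) P = χ(h) P`, so its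
image consists of `χ`-eigenvectors, while it acts on `χ`-eigenvectors as multiplication by `|G|`.
In characteristic zero, `P` therefore vanishes iff `ρ` has no nonzero `χ`-eigenvector. Two distinct
transpositions `s, t` give `Sym₃ = {1, s, t, st, ts, sts}`, and for `χ = sign` the operator `P` is
`1 - ρ(s) - ρ(t) + ρ(st) + ρ(ts) - ρ(sts)`.
-/

namespace Representation

variable {k G V : Type*} [Field k] [Group G] [Fintype G] [AddCommGroup V] [Module k V]
  (ρ : Representation k G V) (χ : G →* kˣ)

def charSum : Module.End k V := ∑ g, ((χ g⁻¹ : kˣ) : k) • ρ g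

lemma charSum_apply (v : V) : charSum ρ χ v = ∑ g, ((χ g⁻¹ : kˣ) : k) • ρ g v := by
  simp [charSum]

lemma apply_charSum (h : G) (v : V) :
    ρ h (charSum ρ χ v) = ((χ h : kˣ) : k) • charSum ρ χ v := by
  rw [charSum_apply, map_sum, Finset.smul_sum, ← Equiv.sum_comp (Equiv.mulLeft h⁻¹)]
  refine Finset.sum_congr rfl fun g _ => ?_
  simp [smul_smul, ← Module.End.mul_apply, ← map_mul, map_mul χ, mul_comm]

lemma charSum_apply_of_forall (v : V) (hv : ∀ g, ρ g v = ((χ g : kˣ) : k) • v) :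
    charSum ρ χ v = (Fintype.card G : k) • v := by
  simp [charSum_apply, hv, smul_smul, Nat.cast_smul_eq_nsmul]

theorem charSum_eq_zero_iff [CharZero k] :
    charSum ρ χ = 0 ↔ ¬ ∃ v : V, v ≠ 0 ∧ ∀ g, ρ g v = ((χ g : kˣ) : k) • v := by
  constructor
  · rintro hP ⟨v, hv, hχ⟩
    have := charSum_apply_of_forall ρ χ v hχ
    rw [hP, LinearMap.zero_apply, eq_comm, smul_eq_zero] at this
    exact hv (this.resolve_left (by simp))
  · intro h
    ext v
    by_contra hv
    exact h ⟨charSum ρ χ v, hv, fun g => apply_charSum ρ χ g v⟩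

end Representation

namespace Equiv.Perm

lemma nodup_and_mem_of_isSwap_fin_three {s t : Perm (Fin 3)} (hs : s.IsSwap) (ht : t.IsSwap)
    (hst : s ≠ t) :
    [1, s, t, s * t, t * s, s * t * s].Nodup ∧ ∀ g, g ∈ [1, s, t, s * t, t * s, s * t * s] := by
  obtain ⟨a, b, hab, rfl⟩ := hs
  obtain ⟨c, d, hcd, rfl⟩ := ht
  revert a b c d
  decide

lemma sum_fin_three_of_isSwap {M : Type*} [AddCommMonoid M] (f : Perm (Fin 3) → M)
    {s t : Perm (Fin 3)} (hs : s.IsSwap) (ht : t.IsSwap) (hst : s ≠ t) :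
    ∑ g, f g = f 1 + f s + f t + f (s * t) + f (t * s) + f (s * t * s) := by
  obtain ⟨hnodup, hmem⟩ := nodup_and_mem_of_isSwap_fin_three hs ht hst
  rw [← Finset.eq_univ_of_forall fun g => List.mem_toFinset.2 (hmem g),
    List.sum_toFinset _ hnodup]
  simp [add_assoc]

end Equiv.Perm

open Representation in
theorem stmt11_general {V : Type*} [AddCommGroup V] [Module ℝ V]
    (ρ : Representation ℝ (Equiv.Perm (Fin 3)) V)
    (s t : Equiv.Perm (Fin 3)) (hs : s.IsSwap) (ht : t.IsSwap) (hst : s ≠ t) :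
    ρ (s * t * s) - ρ (s * t) - ρ (t * s) + ρ s + ρ t - 1 = 0 ↔
      ¬ ∃ v : V, v ≠ 0 ∧ ∀ g, ρ g v = ((Equiv.Perm.sign g : ℤ) : ℝ) • v := by
  let sgn : Equiv.Perm (Fin 3) →* ℝˣ :=
    (Units.map (Int.castRingHom ℝ : ℤ →* ℝ)).comp Equiv.Perm.sign
  have hsgn : ∀ g, ((sgn g⁻¹ : ℝˣ) : ℝ) = Equiv.Perm.sign g := fun g => by simp [sgn]
  have hsum : ρ (s * t * s) - ρ (s * t) - ρ (t * s) + ρ s + ρ t - 1 = -charSum ρ sgn := by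
    rw [charSum, Equiv.Perm.sum_fin_three_of_isSwap _ hs ht hst]
    simp only [hsgn, Equiv.Perm.sign_mul, hs.sign_eq, ht.sign_eq, map_one]
    push_cast
    module
  rw [hsum, neg_eq_zero, charSum_eq_zero_iff]
  rfl

/-- For a finite-dimensional real representation `ρ` of `Sym₃` and distinct
transpositions `s, t`, the identity `ρ(sts) - ρ(st) - ρ(ts) + ρ(s) + ρ(t) - id = 0`
holds iff `ρ` does not contain the sign representation as an irreducible
component. -/
theorem stmt11 {V : Type*} [AddCommGroup V] [Module ℝ V] [FiniteDimensional ℝ V]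
    (ρ : Representation ℝ (Equiv.Perm (Fin 3)) V)
    (s t : Equiv.Perm (Fin 3)) (hs : s.IsSwap) (ht : t.IsSwap) (hst : s ≠ t) :
    ρ (s * t * s) - ρ (s * t) - ρ (t * s) + ρ s + ρ t - 1 = 0 ↔
      ¬ ∃ v : V, v ≠ 0 ∧ ∀ g, ρ g v = ((Equiv.Perm.sign g : ℤ) : ℝ) • v :=
  stmt11_general ρ s t hs ht hst
end

section
/- Let G ∈ ℝ^{k×k} be an invertible symmetric matrix with inverse G' (so G·G' = I, and G' is also symmetric). For a vector α ∈ ℝᵏ define the symmetric matrix X(α) with entries X(α)_{ab} = -(1/2)α_a α_b + (1/4)G'_{ab}. For matrices X, Y define the twisted commutator [X,Y]_{ad} = Σ_{b,c} (X_{ab} G_{bc} Y_{cd} - Y_{ab} G_{bc} X_{cd}), where G_{bc} are the entries of G. Claim: if αᵀGα = βᵀGβ = 2 and αᵀGβ = 0, then Σ_{b,c} (X(α)_{ab} G_{bc} X(β)_{cd} - X(β)_{ab} G_{bc} X(α)_{cd}) = 0 for all a, d, i.e. X(α)·G·X(β) = X(β)·G·X(α). -/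
open Matrix

lemma vmv_mul {k : ℕ} (a b : Fin k → ℝ) (C : Matrix (Fin k) (Fin k) ℝ) :
    Matrix.vecMulVec a b * C = Matrix.vecMulVec a (b ᵥ* C) := by
  ext i j
  simp [Matrix.mul_apply, Matrix.vecMulVec_apply, Matrix.vecMul, dotProduct,
    Finset.mul_sum, mul_assoc]

lemma vmv_mul_vmv {k : ℕ} (a b c d : Fin k → ℝ) :
    Matrix.vecMulVec a b * Matrix.vecMulVec c d = (b ⬝ᵥ c) • Matrix.vecMulVec a d := by
  ext i j
  simp [Matrix.mul_apply, Matrix.vecMulVec_apply, dotProduct, Finset.sum_mul,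
    Finset.mul_sum]
  congr 1; ext x; ring

/-- Coordinate form of the spin-3/2 commutator identity: for a symmetric
invertible Gram matrix `G` with symmetric inverse `G'`, norm-2 vectors `α, β`
with `αᵀGβ = 0`, and `X(γ) = -(1/2)γγᵀ + (1/4)G'`, one has
`X(α)·G·X(β) = X(β)·G·X(α)`. -/
theorem stmt15 {k : ℕ} (G G' : Matrix (Fin k) (Fin k) ℝ)
    (hG : G.IsSymm) (hG' : G'.IsSymm) (h1 : G * G' = 1) (h2 : G' * G = 1)
    (α β : Fin k → ℝ)
    (hα : α ⬝ᵥ G.mulVec α = 2) (hβ : β ⬝ᵥ G.mulVec β = 2)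
    (hαβ : α ⬝ᵥ G.mulVec β = 0) :
    let X : (Fin k → ℝ) → Matrix (Fin k) (Fin k) ℝ := fun γ =>
      (-(1 / 2 : ℝ)) • Matrix.vecMulVec γ γ + (1 / 4 : ℝ) • G'
    X α * G * X β = X β * G * X α := by
  intro X
  have hβα : β ⬝ᵥ G.mulVec α = 0 := by
    rw [Matrix.dotProduct_mulVec, ← hG.eq, Matrix.vecMul_transpose,
      ← dotProduct_comm] at hαβ
    simpa using hαβ
  have key : ∀ u v : Fin k → ℝ, u ⬝ᵥ G.mulVec v = 0 →
      X u * G * X v = (-(1/8 : ℝ)) • Matrix.vecMulVec u u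
        + (-(1/8 : ℝ)) • Matrix.vecMulVec v v + (1/16 : ℝ) • G' := by
    intro u v huv
    have hdot : (u ᵥ* G) ⬝ᵥ v = 0 := by
      rwa [Matrix.dotProduct_mulVec] at huv
    simp only [X]
    simp only [add_mul, mul_add]
    simp only [Matrix.smul_mul, Matrix.mul_smul, smul_smul]
    rw [mul_assoc (Matrix.vecMulVec u u) G G', h1, mul_one, h2, one_mul,
      vmv_mul, vmv_mul_vmv, hdot, zero_smul, smul_zero, one_mul]
    module
  rw [key α β hαβ, key β α hβα]
  ring_nf
  module
end

section
/- Let G ∈ ℝ^{k×k} be an invertible symmetric matrix with inverse G'. For α ∈ ℝᵏ define X(α) := -(1/2)ααᵀ + (1/4)G'. If αᵀGα = βᵀGβ = 2 and αᵀGβ = ∓1, then X(α)·G·X(β) + X(β)·G·X(α) = (1/2)·X(α ± β). -/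
/-!
Write `X(γ) = a • γγᵀ + b • G'` with `G G' = G' G = 1`. Since `γγᵀ G δδᵀ = (γᵀGδ) • γδᵀ`, the product
`X(γ) G X(δ)` is `a² (γᵀGδ) • γδᵀ + ab • (γγᵀ + δδᵀ) + b² • G'`. For symmetric `G` the anticommutator is
therefore `a² (αᵀGβ) • (αβᵀ + βαᵀ) + 2ab • (ααᵀ + ββᵀ) + 2b² • G'`; with `a = -1/2`, `b = 1/4` and
`αᵀGβ = ∓1` this is `-(1/4) (α ± β)(α ± β)ᵀ + (1/8) G' = (1/2) X(α ± β)`.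
-/

open Matrix

section

variable {n R : Type*} [Fintype n] [CommRing R]

theorem vecMulVec_mul_mul_vecMulVec (G : Matrix n n R) (a b c d : n → R) :
    vecMulVec a b * G * vecMulVec c d = (b ⬝ᵥ G *ᵥ c) • vecMulVec a d := by
  rw [vecMulVec_mul, vecMulVec_mul_vecMulVec, vecMulVec_smul, dotProduct_mulVec]

theorem Matrix.IsSymm.dotProduct_mulVec_comm {G : Matrix n n R} (hG : G.IsSymm) (u v : n → R) :
    u ⬝ᵥ G *ᵥ v = v ⬝ᵥ G *ᵥ u := by
  rw [dotProduct_mulVec, ← mulVec_transpose, hG.eq, dotProduct_comm]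

variable [DecidableEq n] {G G' : Matrix n n R}

theorem smul_vecMulVec_add_smul_mul_mul (h1 : G * G' = 1) (h2 : G' * G = 1)
    (a b : R) (γ δ : n → R) :
    (a • vecMulVec γ γ + b • G') * G * (a • vecMulVec δ δ + b • G') =
      (a ^ 2 * (γ ⬝ᵥ G *ᵥ δ)) • vecMulVec γ δ + (a * b) • (vecMulVec γ γ + vecMulVec δ δ)
        + b ^ 2 • G' := by
  have hGG' : vecMulVec γ γ * G * G' = vecMulVec γ γ := by rw [Matrix.mul_assoc, h1, Matrix.mul_one]
  have hG'G : G' * G * vecMulVec δ δ = vecMulVec δ δ := by rw [h2, Matrix.one_mul]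
  have hG'GG' : G' * G * G' = G' := by rw [h2, Matrix.one_mul]
  simp only [add_mul, mul_add, Matrix.smul_mul, Matrix.mul_smul, vecMulVec_mul_mul_vecMulVec,
    hGG', hG'G, hG'GG', smul_smul]
  module

theorem smul_vecMulVec_add_smul_anticomm (hG : G.IsSymm) (h1 : G * G' = 1) (h2 : G' * G = 1)
    (a b : R) (α β : n → R) :
    (a • vecMulVec α α + b • G') * G * (a • vecMulVec β β + b • G') +
        (a • vecMulVec β β + b • G') * G * (a • vecMulVec α α + b • G') =
      (a ^ 2 * (α ⬝ᵥ G *ᵥ β)) • (vecMulVec α β + vecMulVec β α)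
        + (2 * a * b) • (vecMulVec α α + vecMulVec β β) + (2 * b ^ 2) • G' := by
  rw [smul_vecMulVec_add_smul_mul_mul h1 h2, smul_vecMulVec_add_smul_mul_mul h1 h2,
    hG.dotProduct_mulVec_comm β α]
  module

end

theorem stmt16_general {k : ℕ} (G G' : Matrix (Fin k) (Fin k) ℝ)
    (hG : G.IsSymm) (h1 : G * G' = 1) (h2 : G' * G = 1)
    (α β : Fin k → ℝ) :
    let X : (Fin k → ℝ) → Matrix (Fin k) (Fin k) ℝ := fun γ =>
      (-(1 / 2 : ℝ)) • Matrix.vecMulVec γ γ + (1 / 4 : ℝ) • G'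
    (α ⬝ᵥ G.mulVec β = -1 →
      X α * G * X β + X β * G * X α = (1 / 2 : ℝ) • X (α + β)) ∧
    (α ⬝ᵥ G.mulVec β = 1 →
      X α * G * X β + X β * G * X α = (1 / 2 : ℝ) • X (α - β)) := by
  intro X
  have anticomm := smul_vecMulVec_add_smul_anticomm hG h1 h2 (-(1 / 2)) (1 / 4) α β
  refine ⟨fun hαβ => ?_, fun hαβ => ?_⟩ <;>
    simp only [X, anticomm, hαβ, add_vecMulVec, vecMulVec_add, sub_vecMulVec, vecMulVec_sub] <;>
    module

/-- Coordinate form of the spin-3/2 anticommutator identity: for a symmetric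
invertible Gram matrix `G` with symmetric inverse `G'`, norm-2 vectors `α, β`
with `αᵀGβ = ∓1`, and `X(γ) = -(1/2)γγᵀ + (1/4)G'`, one has
`X(α)·G·X(β) + X(β)·G·X(α) = (1/2)·X(α ± β)`. -/
theorem stmt16 {k : ℕ} (G G' : Matrix (Fin k) (Fin k) ℝ)
    (hG : G.IsSymm) (hG' : G'.IsSymm) (h1 : G * G' = 1) (h2 : G' * G = 1)
    (α β : Fin k → ℝ)
    (hα : α ⬝ᵥ G.mulVec α = 2) (hβ : β ⬝ᵥ G.mulVec β = 2) :
    let X : (Fin k → ℝ) → Matrix (Fin k) (Fin k) ℝ := fun γ =>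
      (-(1 / 2 : ℝ)) • Matrix.vecMulVec γ γ + (1 / 4 : ℝ) • G'
    (α ⬝ᵥ G.mulVec β = -1 →
      X α * G * X β + X β * G * X α = (1 / 2 : ℝ) • X (α + β)) ∧
    (α ⬝ᵥ G.mulVec β = 1 →
      X α * G * X β + X β * G * X α = (1 / 2 : ℝ) • X (α - β)) :=
  stmt16_general G G' hG h1 h2 α β
end
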